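/- arXiv:1512.08492 — 4 statements merged into one kernel-verified Lean document; each statement's English description precedes it below -/
import Mathlib

section
/- For p ≥ 3, the function φ(z) = ((1+z)/z²)·log(1+z) − 1/z, defined for z > 0, takes the value 1/p for exactly one z > 0. That is, the equation 1/p = ((1+z)/z²)log(1+z) − 1/z has a unique positive solution. -/
/-!
Writing `φ(z) = ((1 + z) / z²) log (1 + z) - 1 / z`, one computes
`φ'(z) = (2z - (z + 2) log (1 + z)) / z³`, which is negative because `log (1 + z) > 2z / (z + 2)`
for `z > 0`; so `φ` is strictly decreasing on `(0, ∞)` and takes each value at most once.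
Since `φ(1) = 2 log 2 - 1 > 1/3 ≥ 1/p` and `φ(z) → 0` as `z → ∞`, the intermediate value theorem
gives a solution.
-/

open Real Set Filter Topology

noncomputable def oneRSBPhi (z : ℝ) : ℝ := ((1 + z) / z ^ 2) * log (1 + z) - 1 / z

lemma hasDerivAt_oneRSBPhi {z : ℝ} (hz : 0 < z) :
    HasDerivAt oneRSBPhi ((2 * z - (z + 2) * log (1 + z)) / z ^ 3) z := by
  have hlog : HasDerivAt (fun z : ℝ => log (1 + z)) (1 / (1 + z)) z := by
    simpa using ((hasDerivAt_id z).const_add 1).log (by simp; linarith)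
  have hquot := ((hasDerivAt_id' z).const_add 1).div (hasDerivAt_pow 2 z) (by positivity)
  have hinv : HasDerivAt (fun z : ℝ => 1 / z) (-(z ^ 2)⁻¹) z := by
    simpa [one_div] using hasDerivAt_inv hz.ne'
  refine ((hquot.mul hlog).sub hinv).congr_deriv ?_
  simp only [Pi.div_apply]
  field_simp
  ring

lemma strictAntiOn_oneRSBPhi : StrictAntiOn oneRSBPhi (Ioi 0) := by
  refine strictAntiOn_of_deriv_neg (convex_Ioi 0)
    (fun z hz => (hasDerivAt_oneRSBPhi hz).continuousAt.continuousWithinAt) fun z hz => ?_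
  rw [interior_Ioi, mem_Ioi] at hz
  have hlog := lt_log_one_add_of_pos hz
  rw [div_lt_iff₀ (by positivity)] at hlog
  rw [(hasDerivAt_oneRSBPhi hz).deriv]
  exact div_neg_of_neg_of_pos (by linarith) (by positivity)

lemma oneRSBPhi_one : oneRSBPhi 1 = 2 * log 2 - 1 := by
  norm_num [oneRSBPhi]

lemma tendsto_log_one_add_div_atTop : Tendsto (fun z : ℝ => log (1 + z) / z) atTop (𝓝 0) := by
  have h := (tendsto_pow_log_div_mul_add_atTop 1 (-1) 1 one_ne_zero).comp
    (tendsto_atTop_add_const_left atTop 1 tendsto_id)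
  refine h.congr fun z => ?_
  simp

lemma tendsto_oneRSBPhi_atTop : Tendsto oneRSBPhi atTop (𝓝 0) := by
  have h := ((tendsto_inv_atTop_zero.const_add 1).mul tendsto_log_one_add_div_atTop).sub
    tendsto_inv_atTop_zero
  rw [mul_zero, sub_zero] at h
  refine h.congr' ((eventually_gt_atTop 0).mono fun z hz => ?_)
  simp only [oneRSBPhi]
  field_simp
  ring

theorem existsUnique_pos_oneRSBPhi_eq {c : ℝ} (hc₀ : 0 < c) (hc : c ≤ 2 * log 2 - 1) :
    ∃! z : ℝ, 0 < z ∧ oneRSBPhi z = c := by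
  obtain ⟨b, hbc, hb⟩ :=
    ((tendsto_oneRSBPhi_atTop.eventually (gt_mem_nhds hc₀)).and (eventually_ge_atTop 1)).exists
  have hcont : ContinuousOn oneRSBPhi (Icc 1 b) := fun z hz =>
    (hasDerivAt_oneRSBPhi (by linarith [hz.1])).continuousAt.continuousWithinAt
  obtain ⟨z, hz, hzc⟩ :=
    intermediate_value_Icc' hb hcont ⟨hbc.le, by rwa [oneRSBPhi_one]⟩
  refine ⟨z, ⟨by linarith [hz.1], hzc⟩, fun y ⟨hy, hyc⟩ => ?_⟩
  exact strictAntiOn_oneRSBPhi.injOn hy (by linarith [hz.1] : (0 : ℝ) < z) (hyc.trans hzc.symm)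

theorem stmt_1 (p : ℕ) (hp : 3 ≤ p) :
    ∃! z : ℝ, 0 < z ∧ (1 : ℝ) / p = ((1 + z) / z ^ 2) * Real.log (1 + z) - 1 / z := by
  have hp' : (3 : ℝ) ≤ p := by exact_mod_cast hp
  have hinv : (1 : ℝ) / p ≤ 2 * log 2 - 1 := by
    have := log_two_gt_d9
    rw [div_le_iff₀ (by positivity)]
    nlinarith
  simpa only [oneRSBPhi, eq_comm] using
    existsUnique_pos_oneRSBPhi_eq (by positivity) hinv
end

section
/- Fix p ≥ 3 and z > 0 satisfying 1/p = ((1+z)/z²)log(1+z) − 1/z, and set δ = z/(1+z). Define g(u) = (1−u^p)/p + (1−u)/z − ((1+z)/z²)·log(z(1−u)+1) for u ∈ [0,1]. Then g(0) = g(1) = 0 and g(u) > 0 for all u ∈ (0,1). -/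
/-!
With `D(u) = z(1-u)+1` one has `g'(u) = u/D(u) - u^(p-1) = (u/D(u)) (1 - q(u))` where
`q(u) = u^(p-2) D(u)`. Since `log q` is strictly concave and `q(1) = 1`, once `q ≥ 1` at some
point of `(0,1)` it stays `> 1` to the right of it. So `g'` changes sign at most once, from `+`
to `-`, and `g`, which vanishes at `1` and at `0` (the latter is the equation defining `z`), is
positive in between.
-/

open Real Set

theorem pos_of_hasDerivAt_of_neg_after_nonpos {f f' : ℝ → ℝ} {a b : ℝ}
    (hf : ContinuousOn f (Icc a b)) (hf' : ∀ x ∈ Ioo a b, HasDerivAt f (f' x) x)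
    (ha : f a = 0) (hb : f b = 0)
    (hcross : ∀ x y, a < x → x < y → y < b → f' x ≤ 0 → f' y < 0)
    {u : ℝ} (hu : u ∈ Ioo a b) : 0 < f u := by
  by_cases hturn : ∃ x ∈ Ioc a u, f' x ≤ 0
  · obtain ⟨x, ⟨hax, hxu⟩, hx⟩ := hturn
    have hanti : StrictAntiOn f (Icc u b) := by
      refine strictAntiOn_of_hasDerivWithinAt_neg (f' := f') (convex_Icc u b)
        (hf.mono (Icc_subset_Icc hu.1.le le_rfl)) (fun y hy => ?_) (fun y hy => ?_) <;>
        rw [interior_Icc] at hy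
      · exact (hf' y ⟨hu.1.trans hy.1, hy.2⟩).hasDerivWithinAt
      · exact hcross x y hax (hxu.trans_lt hy.1) hy.2 hx
    simpa [hb] using hanti (left_mem_Icc.2 hu.2.le) (right_mem_Icc.2 hu.2.le) hu.2
  · push Not at hturn
    have hmono : StrictMonoOn f (Icc a u) := by
      refine strictMonoOn_of_hasDerivWithinAt_pos (f' := f') (convex_Icc a u)
        (hf.mono (Icc_subset_Icc le_rfl hu.2.le)) (fun y hy => ?_) (fun y hy => ?_) <;>
        rw [interior_Icc] at hy
      · exact (hf' y ⟨hy.1, hy.2.trans hu.2⟩).hasDerivWithinAt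
      · exact hturn y ⟨hy.1, hy.2.le⟩
    simpa [ha] using hmono (left_mem_Icc.2 hu.1.le) (right_mem_Icc.2 hu.1.le) hu.1

theorem strictConcaveOn_log_affine {z : ℝ} (hz : 0 < z) :
    StrictConcaveOn ℝ (Iic 1) fun u => log (z * (1 - u) + 1) := by
  refine ⟨convex_Iic 1, fun x hx y hy hxy a b ha hb hab => ?_⟩
  have hpos : ∀ u ∈ Iic (1 : ℝ), z * (1 - u) + 1 ∈ Ioi 0 := fun u hu => by
    simp only [mem_Iic] at hu; simp only [mem_Ioi]; nlinarith
  have hne : z * (1 - x) + 1 ≠ z * (1 - y) + 1 := fun h => hxy (by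
    have := mul_left_cancel₀ hz.ne' (add_right_cancel h); linarith)
  convert strictConcaveOn_log_Ioi.2 (hpos x hx) (hpos y hy) hne ha hb hab using 2
  simp only [smul_eq_mul]
  linear_combination (-(z + 1)) * hab

theorem strictConcaveOn_log_pow_mul_affine (n : ℕ) {z : ℝ} (hz : 0 < z) :
    StrictConcaveOn ℝ (Ioc 0 1) fun u => log (u ^ n * (z * (1 - u) + 1)) := by
  have hsum : StrictConcaveOn ℝ (Ioc 0 1) fun u => n * log u + log (z * (1 - u) + 1) :=
    ((strictConcaveOn_log_Ioi.concaveOn.smul n.cast_nonneg).subset Ioc_subset_Ioi_self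
      (convex_Ioc 0 1)).add_strictConcaveOn
      ((strictConcaveOn_log_affine hz).subset Ioc_subset_Iic_self (convex_Ioc 0 1))
  refine hsum.congr fun u hu => ?_
  have hD : 0 < z * (1 - u) + 1 := by nlinarith [hu.2]
  rw [log_mul (pow_ne_zero n hu.1.ne') hD.ne', log_pow]

theorem one_lt_pow_mul_affine_of_one_le {n : ℕ} {z x y : ℝ} (hz : 0 < z) (hx : 0 < x)
    (hxy : x < y) (hy : y < 1) (h : 1 ≤ x ^ n * (z * (1 - x) + 1)) :
    1 < y ^ n * (z * (1 - y) + 1) := by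
  have hlt := (strictConcaveOn_log_pow_mul_affine n hz).lt_on_openSegment
    ⟨hx, (hxy.trans hy).le⟩ ⟨one_pos, le_rfl⟩ (hxy.trans hy).ne
    (show y ∈ openSegment ℝ x 1 by rw [openSegment_eq_Ioo (hxy.trans hy)]; exact ⟨hxy, hy⟩)
  simp only [one_pow, sub_self, mul_zero, zero_add, mul_one, log_one, min_eq_right (log_nonneg h)] at hlt
  rwa [log_pos_iff (mul_nonneg (pow_nonneg (hx.trans hxy).le n) (by nlinarith))] at hlt

noncomputable def rsbGap (p : ℕ) (z u : ℝ) : ℝ :=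
  (1 - u ^ p) / p + (1 - u) / z - ((1 + z) / z ^ 2) * log (z * (1 - u) + 1)

theorem rsbGap_zero (p : ℕ) (z : ℝ) :
    rsbGap p z 0 = 1 / p + 1 / z - ((1 + z) / z ^ 2) * log (1 + z) := by
  rcases eq_or_ne p 0 with rfl | hp <;> simp [rsbGap, *, add_comm]

theorem rsbGap_one (p : ℕ) (z : ℝ) : rsbGap p z 1 = 0 := by
  simp [rsbGap]

theorem hasDerivAt_rsbGap {p : ℕ} (hp : p ≠ 0) {z u : ℝ} (hz : z ≠ 0)
    (hu : z * (1 - u) + 1 ≠ 0) :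
    HasDerivAt (rsbGap p z) (u / (z * (1 - u) + 1) - u ^ (p - 1)) u := by
  have hD : HasDerivAt (fun u => z * (1 - u) + 1) (-z) u := by
    simpa using (((hasDerivAt_id u).const_sub 1).const_mul z).add_const 1
  have hg : HasDerivAt (rsbGap p z) _ u :=
    ((((hasDerivAt_pow p u).const_sub 1).div_const (p : ℝ)).add
      (((hasDerivAt_id u).const_sub 1).div_const z)).sub
      ((hD.log hu).const_mul ((1 + z) / z ^ 2))
  refine hg.congr_deriv ?_
  field_simp
  ring

theorem rsbGap_deriv_neg_of_nonpos {p : ℕ} (hp : 2 ≤ p) {z x y : ℝ} (hz : 0 < z) (hx : 0 < x)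
    (hxy : x < y) (hy : y < 1) (h : x / (z * (1 - x) + 1) - x ^ (p - 1) ≤ 0) :
    y / (z * (1 - y) + 1) - y ^ (p - 1) < 0 := by
  have factor : ∀ u < 1, u / (z * (1 - u) + 1) - u ^ (p - 1)
      = u / (z * (1 - u) + 1) * (1 - u ^ (p - 2) * (z * (1 - u) + 1)) := fun u hu => by
    have hD : 0 < z * (1 - u) + 1 := by nlinarith
    obtain ⟨k, rfl⟩ : ∃ k, p = k + 2 := ⟨p - 2, by omega⟩
    field_simp
    simp only [Nat.add_sub_cancel, show k + 2 - 1 = k + 1 by omega]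
    ring
  have hpos : ∀ u, 0 < u → u < 1 → 0 < u / (z * (1 - u) + 1) := fun u hu0 hu1 =>
    div_pos hu0 (by nlinarith)
  have hx1 : x < 1 := hxy.trans hy
  have hy0 : 0 < y := hx.trans hxy
  rw [factor x hx1] at h
  rw [factor y hy]
  refine mul_neg_of_pos_of_neg (hpos y hy0 hy) (sub_neg.2 ?_)
  refine one_lt_pow_mul_affine_of_one_le hz hx hxy hy ?_
  linarith [nonpos_of_mul_nonpos_right h (hpos x hx hx1)]

theorem stmt_3_general (p : ℕ) (hp : 3 ≤ p) (z : ℝ) (hz : 0 < z)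
    (hzeq : (1 : ℝ) / p = ((1 + z) / z ^ 2) * Real.log (1 + z) - 1 / z)
    (g : ℝ → ℝ)
    (hg : ∀ u, g u = (1 - u ^ p) / p + (1 - u) / z
      - ((1 + z) / z ^ 2) * Real.log (z * (1 - u) + 1)) :
    g 0 = 0 ∧ g 1 = 0 ∧ ∀ u ∈ Set.Ioo (0:ℝ) 1, 0 < g u := by
  obtain rfl : g = rsbGap p z := funext hg
  have hderiv : ∀ u ≤ 1, HasDerivAt (rsbGap p z) (u / (z * (1 - u) + 1) - u ^ (p - 1)) u :=
    fun u hu => hasDerivAt_rsbGap (by omega) hz.ne' (by nlinarith)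
  have hzero : rsbGap p z 0 = 0 := by rw [rsbGap_zero]; linarith
  refine ⟨hzero, rsbGap_one p z, fun u hu => ?_⟩
  exact pos_of_hasDerivAt_of_neg_after_nonpos
    (fun x hx => (hderiv x hx.2).continuousAt.continuousWithinAt)
    (fun x hx => hderiv x hx.2.le) hzero (rsbGap_one p z)
    (fun x y hx hxy hy => rsbGap_deriv_neg_of_nonpos (by omega) hz hx hxy hy) hu

theorem stmt_3 (p : ℕ) (hp : 3 ≤ p) (z : ℝ) (hz : 0 < z)
    (hzeq : (1 : ℝ) / p = ((1 + z) / z ^ 2) * Real.log (1 + z) - 1 / z)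
    (δ : ℝ) (hδ : δ = z / (1 + z))
    (g : ℝ → ℝ)
    (hg : ∀ u, g u = (1 - u ^ p) / p + (1 - u) / z
      - ((1 + z) / z ^ 2) * Real.log (z * (1 - u) + 1)) :
    g 0 = 0 ∧ g 1 = 0 ∧ ∀ u ∈ Set.Ioo (0:ℝ) 1, 0 < g u :=
  stmt_3_general p hp z hz hzeq g hg
end

section
/- Let ξ be a mixture function with ξ'(1) + h² < ξ''(1), and suppose s ↦ ξ''(s)^{−1/2} is concave on (0,1]. Let q₀ ∈ [0,1] be the unique solution of ξ'(q₀) + h² = q₀ξ''(q₀). Define L = ξ''(q₀)^{−1/2} and α(s) = 0 for s ∈ [0,q₀), α(s) = ξ'''(s)/(2ξ''(s)^{3/2}) for s ∈ [q₀,1). Then α is nondecreasing on [0,1), and ∫₀¹ dq/(L − ∫₀^q α(r)dr)² = ξ'(1) + h². -/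
/-!
Write `g = ξ''` and `f = g^(-1/2)`. On `[q₀, 1)` the profile `α` is `(-f)' = ξ'''/(2 ξ''^(3/2))`,
which is nondecreasing because `f` is concave, and nonnegative because `ξ''' ≥ 0`, so `α` only
jumps up at `q₀`. Integrating, `L - ∫₀^q α = ξ''(max q₀ q)^(-1/2)`, so the integrand is
`ξ''(max q₀ q)` and the integral is `q₀ ξ''(q₀) + ξ'(1) - ξ'(q₀) = ξ'(1) + h²`.

All of this needs `ξ'' > 0` on `[0, 1]`. On `(0, 1]` it holds because a power series with
nonnegative coefficients vanishing at one positive point vanishes identically, while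
`ξ''(1) > ξ'(1) ≥ 0`; at `0` it holds because the concave `f` is bounded above near `0`.
-/

open Set MeasureTheory intervalIntegral

def derivCoeff (c : ℕ → ℝ) (p : ℕ) : ℝ := (p + 1) * c (p + 1)

section PowerSeries

variable {c : ℕ → ℝ} {R x : ℝ}

theorem summable_mul_pow (hc : Summable fun p => R ^ p * |c p|) (hx : |x| ≤ R) :
    Summable fun p => c p * x ^ p :=
  hc.of_norm_bounded fun p => by
    rw [Real.norm_eq_abs, abs_mul, abs_pow, mul_comm]
    gcongr

theorem summable_pow_mul_abs_of_le (hc : Summable fun p => R ^ p * |c p|) {r : ℝ} (hr : 0 ≤ r)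
    (hrR : r ≤ R) : Summable fun p => r ^ p * |c p| :=
  hc.of_nonneg_of_le (fun p => by positivity) fun p => by gcongr

theorem summable_derivCoeff {r : ℝ} (hr : 0 ≤ r) (hrR : r < R)
    (hc : Summable fun p => R ^ p * |c p|) : Summable fun p => r ^ p * |derivCoeff c p| := by
  have hR : 0 < R := hr.trans_lt hrR
  have hq : ‖r / R‖ < 1 := by
    rw [Real.norm_of_nonneg (div_nonneg hr hR.le)]
    exact (div_lt_one hR).2 hrR
  set B := ∑' p, R ^ p * |c p|
  have hgeom : Summable fun p : ℕ => B / R * (((p : ℝ) + 1) * (r / R) ^ p) :=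
    (((summable_pow_mul_geometric_of_norm_lt_one 1 hq).add
      (summable_geometric_of_norm_lt_one hq)).mul_left (B / R)).congr fun p => by ring
  refine .of_nonneg_of_le (fun p => by positivity) (fun p => ?_) hgeom
  have hcoeff : R ^ (p + 1) * |c (p + 1)| ≤ B := hc.le_tsum (p + 1) fun j _ => by positivity
  calc r ^ p * |derivCoeff c p|
      = ((p : ℝ) + 1) * (r / R) ^ p / R * (R ^ (p + 1) * |c (p + 1)|) := by
        rw [derivCoeff, abs_mul, abs_of_pos (by positivity : (0 : ℝ) < p + 1), div_pow, pow_succ]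
        field_simp
    _ ≤ ((p : ℝ) + 1) * (r / R) ^ p / R * B := by gcongr
    _ = B / R * (((p : ℝ) + 1) * (r / R) ^ p) := by ring

theorem hasDerivAt_tsum_mul_pow (hc : Summable fun p => R ^ p * |c p|) (hx : |x| < R) :
    HasDerivAt (fun s => ∑' p, c p * s ^ p) (∑' p, derivCoeff c p * x ^ p) x := by
  obtain ⟨r, hxr, hrR⟩ := exists_between hx
  have hr : 0 ≤ r := (abs_nonneg x).trans hxr.le
  have hu : Summable fun n : ℕ => |c n| * (n * r ^ (n - 1)) := by
    rw [← summable_nat_add_iff 1]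
    refine (summable_derivCoeff hr hrR hc).congr fun p => ?_
    rw [derivCoeff, abs_mul, abs_of_pos (by positivity : (0 : ℝ) < p + 1)]
    push_cast
    ring
  have hbound : ∀ n y, y ∈ Ioo (-r) r → ‖c n * (n * y ^ (n - 1))‖ ≤ |c n| * (n * r ^ (n - 1)) := by
    intro n y hy
    rw [Real.norm_eq_abs, abs_mul, abs_mul, abs_pow, Nat.abs_cast]
    gcongr
    exact (abs_lt.2 hy).le
  have hxr' : x ∈ Ioo (-r) r := abs_lt.1 hxr
  have hderiv := hasDerivAt_tsum_of_isPreconnected hu isOpen_Ioo isPreconnected_Ioo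
    (fun n y _ => (hasDerivAt_pow n y).const_mul (c n)) hbound
    (⟨by linarith [abs_nonneg x], by linarith [abs_nonneg x]⟩ : (0 : ℝ) ∈ Ioo (-r) r)
    (summable_mul_pow hc (by rw [abs_zero]; linarith [abs_nonneg x])) hxr'
  have hshift : ∑' n : ℕ, c n * (n * x ^ (n - 1)) = ∑' p, derivCoeff c p * x ^ p := by
    rw [(Summable.of_norm_bounded hu fun n => hbound n x hxr').tsum_eq_zero_add]
    simp only [derivCoeff, CharP.cast_eq_zero, zero_mul, mul_zero, zero_add]
    exact tsum_congr fun p => by push_cast; ring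
  exact hshift ▸ hderiv

theorem summable_iterate_derivCoeff (hc : ∀ r ∈ Ico 0 R, Summable fun p => r ^ p * |c p|) (k : ℕ) :
    ∀ r ∈ Ico 0 R, Summable fun p => r ^ p * |(derivCoeff^[k] c) p| := by
  induction k with
  | zero => exact hc
  | succ k ih =>
    intro r hr
    rw [Function.iterate_succ_apply']
    exact summable_derivCoeff hr.1 (by linarith [hr.2])
      (ih ((r + R) / 2) ⟨by linarith [hr.1, hr.2], by linarith [hr.2]⟩)

theorem iterate_derivCoeff_nonneg (hc : ∀ p, 0 ≤ c p) (k p : ℕ) : 0 ≤ (derivCoeff^[k] c) p := by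
  induction k generalizing p with
  | zero => exact hc p
  | succ k ih =>
    rw [Function.iterate_succ_apply']
    exact mul_nonneg (by positivity) (ih _)

theorem hasDerivAt_tsum_iterate_derivCoeff
    (hc : ∀ r ∈ Ico 0 R, Summable fun p => r ^ p * |c p|) (k : ℕ) (hx : x ∈ Ioo (-R) R) :
    HasDerivAt (fun s => ∑' p, (derivCoeff^[k] c) p * s ^ p)
      (∑' p, (derivCoeff^[k + 1] c) p * x ^ p) x := by
  have hx' : |x| < R := abs_lt.2 hx
  rw [Function.iterate_succ_apply']
  exact hasDerivAt_tsum_mul_pow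
    (summable_iterate_derivCoeff hc k ((|x| + R) / 2) ⟨by linarith [abs_nonneg x], by linarith⟩)
    (by linarith)

theorem eqOn_iterate_deriv_of_eq_tsum {F : ℝ → ℝ} (hF : ∀ s, F s = ∑' p, c p * s ^ p)
    (hc : ∀ r ∈ Ico 0 R, Summable fun p => r ^ p * |c p|) (k : ℕ) :
    EqOn (deriv^[k] F) (fun s => ∑' p, (derivCoeff^[k] c) p * s ^ p) (Ioo (-R) R) := by
  obtain rfl := funext hF
  induction k with
  | zero => exact fun _ _ => rfl
  | succ k ih =>
    intro x hx
    rw [Function.iterate_succ_apply', (ih.eventuallyEq_of_mem (isOpen_Ioo.mem_nhds hx)).deriv_eq]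
    exact (hasDerivAt_tsum_iterate_derivCoeff hc k hx).deriv

theorem hasDerivAt_iterate_deriv_of_eq_tsum {F : ℝ → ℝ} (hF : ∀ s, F s = ∑' p, c p * s ^ p)
    (hc : ∀ r ∈ Ico 0 R, Summable fun p => r ^ p * |c p|) (k : ℕ) (hx : x ∈ Ioo (-R) R) :
    HasDerivAt (deriv^[k] F) (deriv^[k + 1] F x) x := by
  rw [eqOn_iterate_deriv_of_eq_tsum hF hc (k + 1) hx]
  exact (hasDerivAt_tsum_iterate_derivCoeff hc k hx).congr_of_eventuallyEq
    ((eqOn_iterate_deriv_of_eq_tsum hF hc k).eventuallyEq_of_mem (isOpen_Ioo.mem_nhds hx))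

theorem iterate_deriv_nonneg_of_eq_tsum {F : ℝ → ℝ} (hF : ∀ s, F s = ∑' p, c p * s ^ p)
    (hc0 : ∀ p, 0 ≤ c p) (hc : ∀ r ∈ Ico 0 R, Summable fun p => r ^ p * |c p|) (k : ℕ)
    (hx : x ∈ Ico 0 R) : 0 ≤ deriv^[k] F x := by
  rw [eqOn_iterate_deriv_of_eq_tsum hF hc k ⟨by linarith [hx.1, hx.2], hx.2⟩]
  exact tsum_nonneg fun p => mul_nonneg (iterate_derivCoeff_nonneg hc0 k p) (pow_nonneg hx.1 p)

theorem tsum_mul_pow_pos_of_pos (hc0 : ∀ p, 0 ≤ c p) (hs : Summable fun p => c p * x ^ p)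
    (hx : 0 < x) {y : ℝ} (hy : 0 < ∑' p, c p * y ^ p) : 0 < ∑' p, c p * x ^ p := by
  refine (tsum_nonneg fun p => mul_nonneg (hc0 p) (pow_nonneg hx.le p)).lt_of_ne' fun h => hy.ne' ?_
  have hterms := (hasSum_zero_iff_of_nonneg fun p => mul_nonneg (hc0 p) (pow_nonneg hx.le p)).1
    (h ▸ hs.hasSum)
  have hzero : ∀ p, c p = 0 := fun p =>
    (mul_eq_zero.1 (congrFun hterms p)).resolve_right (pow_pos hx p).ne'
  simp [hzero]

theorem iterate_deriv_pos_of_eq_tsum {F : ℝ → ℝ} (hF : ∀ s, F s = ∑' p, c p * s ^ p)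
    (hc0 : ∀ p, 0 ≤ c p) (hc : ∀ r ∈ Ico 0 R, Summable fun p => r ^ p * |c p|) (k : ℕ)
    (hx : x ∈ Ioo 0 R) {y : ℝ} (hy : y ∈ Ico 0 R) (hpos : 0 < deriv^[k] F y) :
    0 < deriv^[k] F x := by
  rw [eqOn_iterate_deriv_of_eq_tsum hF hc k ⟨by linarith [hx.1, hx.2], hx.2⟩]
  rw [eqOn_iterate_deriv_of_eq_tsum hF hc k ⟨by linarith [hy.1, hy.2], hy.2⟩] at hpos
  refine tsum_mul_pow_pos_of_pos (iterate_derivCoeff_nonneg hc0 k) ?_ hx.1 hpos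
  exact summable_mul_pow (summable_iterate_derivCoeff hc k x ⟨hx.1.le, hx.2⟩) (abs_of_pos hx.1).le

end PowerSeries

section InvSqrt

variable {g g' : ℝ → ℝ}

theorem hasDerivAt_neg_inv_sqrt {a x : ℝ} (hg : HasDerivAt g a x) (hx : 0 < g x) :
    HasDerivAt (fun y => -(√(g y))⁻¹) (a / (2 * g x ^ ((3 : ℝ) / 2))) x := by
  have hsqrt : 0 < √(g x) := Real.sqrt_pos.2 hx
  refine ((hg.sqrt hx.ne').inv hsqrt.ne').fun_neg.congr_deriv ?_
  rw [show (3 : ℝ) / 2 = 1 + 1 / 2 by norm_num, Real.rpow_add hx, Real.rpow_one,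
    ← Real.sqrt_eq_rpow, neg_div, neg_neg, Real.sq_sqrt hx.le]
  field_simp

theorem pos_on_Icc_of_concaveOn_inv_sqrt (hg : ContinuousWithinAt g (Ioi 0) 0)
    (hpos : ∀ x ∈ Ioc (0 : ℝ) 1, 0 < g x)
    (hconc : ConcaveOn ℝ (Ioc 0 1) fun s => (√(g s))⁻¹) : ∀ x ∈ Icc (0 : ℝ) 1, 0 < g x := by
  set f := fun s => (√(g s))⁻¹
  have hf : ∀ x ∈ Ioc (0 : ℝ) 1, 0 < f x := fun x hx => inv_pos.2 (Real.sqrt_pos.2 (hpos x hx))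
  set M := f (1 / 2) + |f 1 - f (1 / 2)| with hM_def
  have hM : 0 < M := by positivity [hf (1 / 2) ⟨by norm_num, by norm_num⟩]
  -- concavity bounds `f` above near `0` by the chord through `1/2` and `1`
  have hbound : ∀ x ∈ Ioc (0 : ℝ) (1 / 2), f x ≤ M := by
    intro x hx
    rcases hx.2.lt_or_eq with hx' | rfl
    · have hslope := hconc.slope_anti_adjacent ⟨hx.1, by linarith [hx.2]⟩ ⟨one_pos, le_rfl⟩ hx'
        (by norm_num : (1 / 2 : ℝ) < 1)
      rw [div_le_div_iff₀ (by norm_num) (by linarith)] at hslope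
      have hd := mul_le_mul_of_nonneg_right (neg_le_abs (f 1 - f (1 / 2))) (sub_nonneg.2 hx.2)
      have hd' := mul_le_mul_of_nonneg_left (by linarith [hx.1] : 1 / 2 - x ≤ 1 / 2)
        (abs_nonneg (f 1 - f (1 / 2)))
      linarith
    · exact le_add_of_nonneg_right (abs_nonneg _)
  have hlower : ∀ x ∈ Ioc (0 : ℝ) (1 / 2), M⁻¹ ^ 2 ≤ g x := by
    intro x hx
    have hgx := hpos x ⟨hx.1, hx.2.trans (by norm_num)⟩
    have hle : M⁻¹ ≤ √(g x) := (inv_le_comm₀ hM (Real.sqrt_pos.2 hgx)).2 (hbound x hx)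
    calc M⁻¹ ^ 2 ≤ √(g x) ^ 2 := by gcongr
      _ = g x := Real.sq_sqrt hgx.le
  have hg0 : M⁻¹ ^ 2 ≤ g 0 := ge_of_tendsto hg <| by
    filter_upwards [Ioc_mem_nhdsGT (by norm_num : (0 : ℝ) < 1 / 2)] with x hx
    exact hlower x hx
  intro x hx
  rcases hx.1.eq_or_lt with rfl | hx0
  · exact (by positivity : (0 : ℝ) < M⁻¹ ^ 2).trans_le hg0
  · exact hpos x ⟨hx0, hx.2⟩

theorem monotoneOn_of_concaveOn_inv_sqrt {S : Set ℝ} (hg : ∀ x ∈ S, HasDerivAt g (g' x) x)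
    (hpos : ∀ x ∈ S, 0 < g x) (hconc : ConcaveOn ℝ S fun s => (√(g s))⁻¹) :
    MonotoneOn (fun s => g' s / (2 * g s ^ ((3 : ℝ) / 2))) S := by
  have hd : ∀ x ∈ S, HasDerivAt (fun s => (√(g s))⁻¹) (-(g' x / (2 * g x ^ ((3 : ℝ) / 2)))) x :=
    fun x hx => by simpa using (hasDerivAt_neg_inv_sqrt (hg x hx) (hpos x hx)).fun_neg
  intro x hx y hy hxy
  have := hconc.antitoneOn_deriv (fun z hz => (hd z hz).differentiableAt) hx hy hxy
  rw [(hd x hx).deriv, (hd y hy).deriv] at this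
  exact neg_le_neg_iff.1 this

theorem monotoneOn_Icc_of_concaveOn_inv_sqrt (hg : ∀ x ∈ Icc (0 : ℝ) 1, HasDerivAt g (g' x) x)
    (hg' : ContinuousAt g' 0) (hpos : ∀ x ∈ Icc (0 : ℝ) 1, 0 < g x)
    (hconc : ConcaveOn ℝ (Ioc 0 1) fun s => (√(g s))⁻¹) :
    MonotoneOn (fun s => g' s / (2 * g s ^ ((3 : ℝ) / 2))) (Icc 0 1) := by
  rw [← Ioc_insert_left zero_le_one]
  have hg0 := hpos 0 ⟨le_rfl, zero_le_one⟩
  refine (monotoneOn_of_concaveOn_inv_sqrt (fun x hx => hg x (Ioc_subset_Icc_self hx))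
    (fun x hx => hpos x (Ioc_subset_Icc_self hx)) hconc).insert_of_continuousWithinAt ?_ ?_
  · rw [← mem_closure_iff_clusterPt, closure_Ioc zero_ne_one]
    exact ⟨le_rfl, zero_le_one⟩
  · have hden : ContinuousAt (fun s => 2 * g s ^ ((3 : ℝ) / 2)) 0 :=
      continuousAt_const.mul ((hg 0 ⟨le_rfl, zero_le_one⟩).continuousAt.rpow_const (.inl hg0.ne'))
    exact (hg'.div hden (by positivity)).continuousWithinAt

end InvSqrt

theorem monotoneOn_ite_zero {α φ : ℝ → ℝ} {a b q₀ : ℝ} (hφ : MonotoneOn φ (Ico q₀ b))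
    (hφ0 : ∀ x ∈ Ico q₀ b, 0 ≤ φ x) (hα : ∀ s ∈ Ico a b, α s = if s < q₀ then 0 else φ s) :
    MonotoneOn α (Ico a b) := by
  intro x hx y hy hxy
  rw [hα x hx, hα y hy]
  split_ifs with hxq hyq hyq
  · exact le_rfl
  · exact hφ0 y ⟨not_lt.1 hyq, hy.2⟩
  · exact absurd (hxy.trans_lt hyq) hxq
  · exact hφ ⟨not_lt.1 hxq, hx.2⟩ ⟨not_lt.1 hyq, hy.2⟩ hxy

section Integral

variable {f g g' α : ℝ → ℝ} {q₀ : ℝ}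

theorem integral_eq_inv_sqrt_sub_inv_sqrt (hq₀ : q₀ ∈ Icc (0 : ℝ) 1)
    (hg : ∀ x ∈ Icc (0 : ℝ) 1, HasDerivAt g (g' x) x) (hpos : ∀ x ∈ Icc (0 : ℝ) 1, 0 < g x)
    (hφ : MonotoneOn (fun s => g' s / (2 * g s ^ ((3 : ℝ) / 2))) (Icc 0 1))
    (hα : ∀ s ∈ Ico (0 : ℝ) 1, α s = if s < q₀ then 0 else g' s / (2 * g s ^ ((3 : ℝ) / 2)))
    {q : ℝ} (hq : q ∈ Icc (0 : ℝ) 1) :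
    ∫ r in (0 : ℝ)..q, α r = (√(g q₀))⁻¹ - (√(g (max q₀ q)))⁻¹ := by
  have hzero : ∀ q ∈ Icc 0 q₀, ∫ r in (0 : ℝ)..q, α r = 0 := fun q hq => by
    rw [integral_congr_Ioo_of_le hq.1 (g := 0) fun x hx => by
      rw [hα x ⟨hx.1.le, by linarith [hx.2, hq.2, hq₀.2]⟩, if_pos (hx.2.trans_le hq.2)]; rfl]
    simp
  rcases le_total q q₀ with hle | hge
  · rw [max_eq_left hle, sub_self, hzero q ⟨hq.1, hle⟩]
  have hEq : EqOn α (fun s => g' s / (2 * g s ^ ((3 : ℝ) / 2))) (Ioo q₀ q) := fun x hx => by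
    rw [hα x ⟨hq₀.1.trans hx.1.le, hx.2.trans_le hq.2⟩, if_neg (not_lt.2 hx.1.le)]
  have hφi : IntervalIntegrable (fun s => g' s / (2 * g s ^ ((3 : ℝ) / 2))) volume q₀ q :=
    (hφ.mono (by rw [uIcc_of_le hge]; exact Icc_subset_Icc hq₀.1 hq.2)).intervalIntegrable
  have hftc : ∫ r in q₀..q, α r = -(√(g q))⁻¹ - -(√(g q₀))⁻¹ := by
    rw [integral_congr_Ioo_of_le hge hEq]
    refine integral_eq_sub_of_hasDerivAt (f := fun y => -(√(g y))⁻¹) (fun x hx => ?_) hφi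
    rw [uIcc_of_le hge] at hx
    have hx' : x ∈ Icc (0 : ℝ) 1 := ⟨hq₀.1.trans hx.1, hx.2.trans hq.2⟩
    exact hasDerivAt_neg_inv_sqrt (hg x hx') (hpos x hx')
  have hα0 : IntervalIntegrable α volume 0 q₀ := by
    refine IntervalIntegrable.congr_uIoo (f := 0) intervalIntegrable_const fun x hx => ?_
    rw [uIoo_of_le hq₀.1] at hx
    rw [hα x ⟨hx.1.le, hx.2.trans_le hq₀.2⟩, if_pos hx.2]; rfl
  rw [max_eq_right hge, ← integral_add_adjacent_intervals hα0
    (hφi.congr_uIoo (by rw [uIoo_of_le hge]; exact hEq.symm)), hzero q₀ ⟨hq₀.1, le_rfl⟩, hftc]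
  ring

theorem integral_one_div_sq_sub_integral (hq₀ : q₀ ∈ Icc (0 : ℝ) 1)
    (hf : ∀ x ∈ Icc (0 : ℝ) 1, HasDerivAt f (g x) x)
    (hg : ∀ x ∈ Icc (0 : ℝ) 1, HasDerivAt g (g' x) x) (hpos : ∀ x ∈ Icc (0 : ℝ) 1, 0 < g x)
    (hφ : MonotoneOn (fun s => g' s / (2 * g s ^ ((3 : ℝ) / 2))) (Icc 0 1))
    (hα : ∀ s ∈ Ico (0 : ℝ) 1, α s = if s < q₀ then 0 else g' s / (2 * g s ^ ((3 : ℝ) / 2))) :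
    ∫ q in (0 : ℝ)..1, 1 / ((√(g q₀))⁻¹ - ∫ r in (0 : ℝ)..q, α r) ^ 2
      = q₀ * g q₀ + (f 1 - f q₀) := by
  have hmax : ∀ q ∈ Icc (0 : ℝ) 1, max q₀ q ∈ Icc (0 : ℝ) 1 := fun q hq =>
    ⟨hq₀.1.trans (le_max_left _ _), max_le hq₀.2 hq.2⟩
  have hgc : ContinuousOn g (Icc 0 1) := fun x hx => (hg x hx).continuousAt.continuousWithinAt
  rw [integral_congr (g := fun q => g (max q₀ q)) fun q hq => by
    rw [uIcc_of_le zero_le_one] at hq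
    rw [integral_eq_inv_sqrt_sub_inv_sqrt hq₀ hg hpos hφ hα hq, sub_sub_cancel, one_div, inv_pow,
      inv_inv, Real.sq_sqrt (hpos _ (hmax q hq)).le]]
  have hint : IntervalIntegrable (fun q => g (max q₀ q)) volume 0 1 :=
    (hgc.comp (continuous_const.max continuous_id).continuousOn hmax).intervalIntegrable_of_Icc
      zero_le_one
  have hq₀' : q₀ ∈ uIcc (0 : ℝ) 1 := by rwa [uIcc_of_le zero_le_one]
  have hconst : ∫ q in (0 : ℝ)..q₀, g (max q₀ q) = q₀ * g q₀ := by
    rw [integral_congr (g := fun _ => g q₀) fun q hq => by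
      rw [uIcc_of_le hq₀.1] at hq
      rw [max_eq_left hq.2]]
    simp
  have hftc : ∫ q in q₀..1, g (max q₀ q) = f 1 - f q₀ := by
    rw [integral_congr (g := g) fun q hq => by
      rw [uIcc_of_le hq₀.2] at hq
      rw [max_eq_right hq.1]]
    refine integral_eq_sub_of_hasDerivAt (fun x hx => ?_)
      ((hgc.mono (Icc_subset_Icc hq₀.1 le_rfl)).intervalIntegrable_of_Icc hq₀.2)
    rw [uIcc_of_le hq₀.2] at hx
    exact hf x ⟨hq₀.1.trans hx.1, hx.2⟩
  rw [← integral_add_adjacent_intervals (hint.mono_set (uIcc_subset_uIcc_left hq₀'))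
    (hint.mono_set (uIcc_subset_uIcc_right hq₀')), hconst, hftc]

end Integral

theorem stmt_8_general (γ : ℕ → ℝ)
    (hsum : Summable fun p => 2 ^ p * γ p ^ 2) (h : ℝ)
    (ξ : ℝ → ℝ) (hξ : ∀ s : ℝ, ξ s = ∑' p : ℕ, γ p ^ 2 * s ^ p)
    (hlow : deriv ξ 1 + h ^ 2 < deriv (deriv ξ) 1)
    (hconc : ConcaveOn ℝ (Set.Ioc 0 1) fun s => (Real.sqrt (deriv (deriv ξ) s))⁻¹)
    (q₀ : ℝ) (hq₀ : q₀ ∈ Set.Icc (0:ℝ) 1)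
    (hq₀eq : deriv ξ q₀ + h ^ 2 = q₀ * deriv (deriv ξ) q₀)
    (L : ℝ) (hL : L = (Real.sqrt (deriv (deriv ξ) q₀))⁻¹)
    (α : ℝ → ℝ)
    (hα : ∀ s ∈ Set.Ico (0:ℝ) 1, α s =
      if s < q₀ then 0
      else deriv (deriv (deriv ξ)) s / (2 * (deriv (deriv ξ) s) ^ ((3:ℝ) / 2))) :
    MonotoneOn α (Set.Ico (0:ℝ) 1) ∧
    (∫ q in (0:ℝ)..1, 1 / (L - ∫ r in (0:ℝ)..q, α r) ^ 2) = deriv ξ 1 + h ^ 2 := by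
  have hc0 : ∀ p, 0 ≤ γ p ^ 2 := fun p => sq_nonneg _
  have hc : ∀ r ∈ Ico (0 : ℝ) 2, Summable fun p => r ^ p * |γ p ^ 2| := fun r hr =>
    summable_pow_mul_abs_of_le (by simpa using hsum) hr.1 hr.2.le
  have hI : ∀ x ∈ Icc (0 : ℝ) 1, x ∈ Ico (0 : ℝ) 2 := fun x hx => ⟨hx.1, by linarith [hx.2]⟩
  have hder : ∀ k, ∀ x ∈ Icc (0 : ℝ) 1, HasDerivAt (deriv^[k] ξ) (deriv^[k + 1] ξ x) x :=
    fun k x hx => hasDerivAt_iterate_deriv_of_eq_tsum hξ hc k ⟨by linarith [hx.1], (hI x hx).2⟩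
  have hnonneg : ∀ k, ∀ x ∈ Icc (0 : ℝ) 1, 0 ≤ deriv^[k] ξ x :=
    fun k x hx => iterate_deriv_nonneg_of_eq_tsum hξ hc0 hc k (hI x hx)
  have hpos : ∀ x ∈ Icc (0 : ℝ) 1, 0 < deriv (deriv ξ) x := by
    have hξ'_one : 0 ≤ deriv ξ 1 := hnonneg 1 1 ⟨zero_le_one, le_rfl⟩
    have hξ''_one : 0 < deriv (deriv ξ) 1 := by linarith [sq_nonneg h]
    exact pos_on_Icc_of_concaveOn_inv_sqrt
      (hder 2 0 ⟨le_rfl, zero_le_one⟩).continuousAt.continuousWithinAt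
      (fun x hx => iterate_deriv_pos_of_eq_tsum hξ hc0 hc 2 ⟨hx.1, by linarith [hx.2]⟩
        (hI 1 ⟨zero_le_one, le_rfl⟩) hξ''_one) hconc
  have hder₁ : ∀ x ∈ Icc (0 : ℝ) 1, HasDerivAt (deriv ξ) (deriv (deriv ξ) x) x := hder 1
  have hder₂ : ∀ x ∈ Icc (0 : ℝ) 1, HasDerivAt (deriv (deriv ξ)) (deriv (deriv (deriv ξ)) x) x :=
    hder 2
  have hφ := monotoneOn_Icc_of_concaveOn_inv_sqrt hder₂
    (hder 3 0 ⟨le_rfl, zero_le_one⟩).continuousAt hpos hconc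
  have hsub : Ico q₀ 1 ⊆ Icc 0 1 := fun x hx => ⟨hq₀.1.trans hx.1, hx.2.le⟩
  refine ⟨monotoneOn_ite_zero (hφ.mono hsub) (fun x hx => ?_) hα, ?_⟩
  · exact div_nonneg (hnonneg 3 x (hsub hx))
      (mul_nonneg zero_le_two (Real.rpow_nonneg (hpos x (hsub hx)).le _))
  · rw [hL, integral_one_div_sq_sub_integral hq₀ hder₁ hder₂ hpos hφ hα]
    linarith

theorem stmt_8 (γ : ℕ → ℝ) (hγ : ∀ p, 0 ≤ γ p) (hγ0 : γ 0 = 0) (hγ1 : γ 1 = 0)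
    (hsum : Summable fun p => 2 ^ p * γ p ^ 2) (h : ℝ)
    (ξ : ℝ → ℝ) (hξ : ∀ s : ℝ, ξ s = ∑' p : ℕ, γ p ^ 2 * s ^ p)
    (hlow : deriv ξ 1 + h ^ 2 < deriv (deriv ξ) 1)
    (hconc : ConcaveOn ℝ (Set.Ioc 0 1) fun s => (Real.sqrt (deriv (deriv ξ) s))⁻¹)
    (q₀ : ℝ) (hq₀ : q₀ ∈ Set.Icc (0:ℝ) 1)
    (hq₀eq : deriv ξ q₀ + h ^ 2 = q₀ * deriv (deriv ξ) q₀)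
    (L : ℝ) (hL : L = (Real.sqrt (deriv (deriv ξ) q₀))⁻¹)
    (α : ℝ → ℝ)
    (hα : ∀ s ∈ Set.Ico (0:ℝ) 1, α s =
      if s < q₀ then 0
      else deriv (deriv (deriv ξ)) s / (2 * (deriv (deriv ξ) s) ^ ((3:ℝ) / 2))) :
    MonotoneOn α (Set.Ico (0:ℝ) 1) ∧
    (∫ q in (0:ℝ)..1, 1 / (L - ∫ r in (0:ℝ)..q, α r) ^ 2) = deriv ξ 1 + h ^ 2 :=
  stmt_8_general γ hsum h ξ hξ hlow hconc q₀ hq₀ hq₀eq L hL α hα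
end

section
/- Let ξ be increasing and convex on [0,1] with ξ' > 0 on (0,1]. Suppose x : [0,1] → [0,1] is nondecreasing with ∫₀¹ ξ'(s)·x(s) ds ≤ C. Then ∫₀¹ x(s) ds ≤ C/(ξ(1)−ξ(1/2)) + C/ξ'(1/2). -/
/-!
Split `∫₀¹ x` at `1/2`. Since `x` is nondecreasing, `x (1/2) (ξ 1 - ξ (1/2)) ≤ ∫_{1/2}^1 ξ' x ≤ C`,
which bounds `∫₀^{1/2} x ≤ x (1/2)`. On `[1/2, 1]` the convexity of `ξ` gives `ξ' ≥ ξ' (1/2) > 0`,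
so `ξ' (1/2) ∫_{1/2}^1 x ≤ ∫_{1/2}^1 ξ' x ≤ C`.
-/

open Set intervalIntegral MeasureTheory

section MonotoneIntegral

variable {f g : ℝ → ℝ} {a b : ℝ}

theorem MonotoneOn.intervalIntegrable_of_le (hab : a ≤ b) (hf : MonotoneOn f (Icc a b)) :
    IntervalIntegrable f volume a b :=
  MonotoneOn.intervalIntegrable (by rwa [uIcc_of_le hab])

theorem MonotoneOn.intervalIntegrable_mul (hab : a ≤ b) (hf : MonotoneOn f (Icc a b))
    (hg : MonotoneOn g (Icc a b)) (hg₀ : ∀ s ∈ Icc a b, 0 ≤ g s) :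
    IntervalIntegrable (fun s => f s * g s) volume a b := by
  -- `f` may change sign; `(f - f a) * g` is a product of nonnegative monotone functions
  have hshift : MonotoneOn ((fun s => f s - f a) * g) (uIcc a b) := by
    rw [uIcc_of_le hab]
    have hf' : MonotoneOn (fun s => f s - f a) (Icc a b) := fun s hs t ht hst =>
      sub_le_sub_right (hf hs ht hst) (f a)
    exact hf'.mul hg (fun s hs => sub_nonneg.mpr (hf (left_mem_Icc.mpr hab) hs hs.1)) hg₀
  convert hshift.intervalIntegrable.add ((hg.intervalIntegrable_of_le hab).const_mul (f a))
    using 1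
  ext s
  simp only [Pi.mul_apply]
  ring

theorem integral_le_mul_of_monotoneOn (hab : a ≤ b) (hf : MonotoneOn f (Icc a b)) :
    ∫ s in a..b, f s ≤ (b - a) * f b := by
  calc ∫ s in a..b, f s ≤ ∫ _ in a..b, f b :=
        integral_mono_on hab (hf.intervalIntegrable_of_le hab) intervalIntegrable_const
          (fun s hs => hf hs (right_mem_Icc.mpr hab) hs.2)
    _ = (b - a) * f b := by rw [intervalIntegral.integral_const, smul_eq_mul]

theorem mul_integral_le_integral_mul_of_monotoneOn (hab : a ≤ b) (hf : MonotoneOn f (Icc a b))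
    (hg : MonotoneOn g (Icc a b)) (hg₀ : ∀ s ∈ Icc a b, 0 ≤ g s) :
    f a * ∫ s in a..b, g s ≤ ∫ s in a..b, f s * g s := by
  rw [← intervalIntegral.integral_const_mul]
  exact integral_mono_on hab ((hg.intervalIntegrable_of_le hab).const_mul _)
    (hf.intervalIntegrable_mul hab hg hg₀) fun s hs =>
      mul_le_mul_of_nonneg_right (hf (left_mem_Icc.mpr hab) hs hs.1) (hg₀ s hs)

end MonotoneIntegral

theorem mul_sub_le_integral_deriv_mul {ξ x : ℝ → ℝ} {a b : ℝ} (hab : a ≤ b)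
    (hdiff : ∀ s ∈ Icc a b, DifferentiableAt ℝ ξ s) (hD : MonotoneOn (deriv ξ) (Icc a b))
    (hD₀ : ∀ s ∈ Icc a b, 0 ≤ deriv ξ s) (hx : MonotoneOn x (Icc a b)) :
    x a * (ξ b - ξ a) ≤ ∫ s in a..b, deriv ξ s * x s := by
  rw [← integral_deriv_eq_sub (by rwa [uIcc_of_le hab]) (hD.intervalIntegrable_of_le hab)]
  simpa only [mul_comm (x _)] using mul_integral_le_integral_mul_of_monotoneOn hab hx hD hD₀

theorem ConvexOn.lt_of_deriv_pos {S : Set ℝ} {f : ℝ → ℝ} {a b : ℝ} (hf : ConvexOn ℝ S f)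
    (ha : a ∈ S) (hb : b ∈ S) (hab : a < b) (hfa : DifferentiableAt ℝ f a) (hpos : 0 < deriv f a) :
    f a < f b := by
  have hslope := hpos.trans_le (hf.deriv_le_slope ha hb hab hfa)
  rw [slope_def_field] at hslope
  exact sub_pos.mp ((div_pos_iff_of_pos_right (sub_pos.mpr hab)).mp hslope)

theorem stmt_15_general (ξ : ℝ → ℝ) (C : ℝ)
    (hconv : ConvexOn ℝ (Set.Icc 0 1) ξ)
    (hdiff : ∀ s ∈ Set.Icc (0:ℝ) 1, DifferentiableAt ℝ ξ s)
    (hderiv : ∀ s ∈ Set.Ioc (0:ℝ) 1, 0 < deriv ξ s)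
    (x : ℝ → ℝ) (hxmono : MonotoneOn x (Set.Icc 0 1))
    (hxrange : ∀ s ∈ Set.Icc (0:ℝ) 1, x s ∈ Set.Icc (0:ℝ) 1)
    (hint : (∫ s in (0:ℝ)..1, deriv ξ s * x s) ≤ C) :
    (∫ s in (0:ℝ)..1, x s) ≤ C / (ξ 1 - ξ (1 / 2)) + C / deriv ξ (1 / 2) := by
  have hlow : Icc (0:ℝ) (1 / 2) ⊆ Icc 0 1 := Icc_subset_Icc le_rfl (by norm_num)
  have hup : Icc (1 / 2 : ℝ) 1 ⊆ Icc 0 1 := Icc_subset_Icc (by norm_num) le_rfl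
  have hD : MonotoneOn (deriv ξ) (Icc 0 1) := hconv.monotoneOn_deriv hdiff
  have hD₀ : ∀ s ∈ Icc (1 / 2 : ℝ) 1, 0 ≤ deriv ξ s := fun s hs =>
    (hderiv s ⟨by linarith [hs.1], hs.2⟩).le
  have hDhalf : 0 < deriv ξ (1 / 2) := hderiv _ (by norm_num)
  have hx₀ : ∀ s ∈ Icc (0:ℝ) 1, 0 ≤ x s := fun s hs => (hxrange s hs).1
  set I := ∫ s in (1 / 2 : ℝ)..1, deriv ξ s * x s
  -- `deriv ξ * x` may be negative at `0` only, a null set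
  have hIC : I ≤ C := (integral_mono_interval (by norm_num) (by norm_num) le_rfl
    (ae_restrict_of_forall_mem measurableSet_Ioc fun s hs =>
      mul_nonneg (hderiv s hs).le (hx₀ s (Ioc_subset_Icc_self hs)))
    (hD.intervalIntegrable_mul zero_le_one hxmono hx₀)).trans hint
  have hgap : 0 < ξ 1 - ξ (1 / 2) := sub_pos.mpr <| hconv.lt_of_deriv_pos
    (show (1 / 2 : ℝ) ∈ Icc 0 1 by norm_num) (show (1 : ℝ) ∈ Icc 0 1 by norm_num) (by norm_num)
    (hdiff _ (by norm_num)) hDhalf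
  have hfirst : ∫ s in (0:ℝ)..(1 / 2), x s ≤ C / (ξ 1 - ξ (1 / 2)) := by
    have hxhalf : x (1 / 2) ≤ C / (ξ 1 - ξ (1 / 2)) := by
      rw [le_div_iff₀ hgap]
      exact (mul_sub_le_integral_deriv_mul (by norm_num) (fun s hs => hdiff s (hup hs))
        (hD.mono hup) hD₀ (hxmono.mono hup)).trans hIC
    linarith [integral_le_mul_of_monotoneOn (by norm_num) (hxmono.mono hlow),
      hx₀ (1 / 2) (by norm_num)]
  have hsecond : ∫ s in (1 / 2 : ℝ)..1, x s ≤ C / deriv ξ (1 / 2) := by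
    rw [le_div_iff₀' hDhalf]
    exact (mul_integral_le_integral_mul_of_monotoneOn (by norm_num) (hD.mono hup)
      (hxmono.mono hup) fun s hs => hx₀ s (hup hs)).trans hIC
  rw [← integral_add_adjacent_intervals ((hxmono.mono hlow).intervalIntegrable_of_le (by norm_num))
    ((hxmono.mono hup).intervalIntegrable_of_le (by norm_num))]
  linarith

theorem stmt_15 (ξ : ℝ → ℝ) (C : ℝ)
    (hmono : MonotoneOn ξ (Set.Icc 0 1))
    (hconv : ConvexOn ℝ (Set.Icc 0 1) ξ)
    (hdiff : ∀ s ∈ Set.Icc (0:ℝ) 1, DifferentiableAt ℝ ξ s)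
    (hderiv : ∀ s ∈ Set.Ioc (0:ℝ) 1, 0 < deriv ξ s)
    (x : ℝ → ℝ) (hxmono : MonotoneOn x (Set.Icc 0 1))
    (hxrange : ∀ s ∈ Set.Icc (0:ℝ) 1, x s ∈ Set.Icc (0:ℝ) 1)
    (hint : (∫ s in (0:ℝ)..1, deriv ξ s * x s) ≤ C) :
    (∫ s in (0:ℝ)..1, x s) ≤ C / (ξ 1 - ξ (1 / 2)) + C / deriv ξ (1 / 2) :=
  stmt_15_general ξ C hconv hdiff hderiv x hxmono hxrange hint
end
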